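/- The map sending the switching class of a graph G on n vertices to the isomorphism class of its double G̃ is a bijection between switching classes of graphs on n vertices and isomorphism classes of n-rainbow graphs on 2n vertices. -/

import Mathlib

open SimpleGraph

/-- `c` is an `n`-rainbow coloring of `G`: every color appears exactly once in the
open neighborhood of each vertex. -/
def IsRainbow {V : Type*} {n : ℕ} (G : SimpleGraph V) (c : V → Fin n) : Prop :=
  ∀ v : V, ∀ i : Fin n, ∃! w : V, G.Adj v w ∧ c w = i

/-- Switching `G` at the vertex `v`: reverse the adjacency between `v` and all other
vertices. -/
def switch {V : Type*} (G : SimpleGraph V) (v : V) : SimpleGraph V :=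
  SimpleGraph.fromRel (fun x y => Xor' (G.Adj x y) (x = v ∨ y = v))

/-- The double `G̃` of `G`: vertices `inl i` (= `i`) and `inr i` (= `i'`), with edges
`(i,i')`; `(i,j)` and `(i',j')` for edges `(i,j)` of `G`; and `(i,j')`, `(i',j)` for
non-edges `i ≠ j` of `G`. -/
def double {V : Type*} (G : SimpleGraph V) : SimpleGraph (V ⊕ V) :=
  SimpleGraph.fromRel (fun x y =>
    match x, y with
    | .inl i, .inl j => G.Adj i j
    | .inr i, .inr j => G.Adj i j
    | .inl i, .inr j => i = j ∨ ¬ G.Adj i j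
    | .inr i, .inl j => i = j ∨ ¬ G.Adj i j)

open Classical in
/-- The Seidel matrix of `G`: zero diagonal, `1` for edges, `-1` for non-edges. -/
noncomputable def seidel {V : Type*} (G : SimpleGraph V) : Matrix V V ℝ :=
  fun i j => if i = j then 0 else if G.Adj i j then 1 else -1

/-- A Seidel matrix: symmetric, zero diagonal, off-diagonal entries `±1`. -/
def IsSeidel {m : Type*} (A : Matrix m m ℝ) : Prop :=
  A.IsSymm ∧ (∀ i, A i i = 0) ∧ ∀ i j, i ≠ j → A i j = 1 ∨ A i j = -1

/-- A permutation matrix. -/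
def IsPermMatrix {m : Type*} [DecidableEq m] (P : Matrix m m ℝ) : Prop :=
  ∃ σ : Equiv.Perm m, P = σ.permMatrix ℝ

/-- A line (row or column) with exactly one nonzero entry, equal to `±1`. -/
def SignedPermLine {m : Type*} (r : m → ℝ) : Prop :=
  ∃ j, (r j = 1 ∨ r j = -1) ∧ ∀ k, k ≠ j → r k = 0

/-- A line with either exactly one nonzero entry `±1`, or exactly two nonzero entries,
each `±1/2`. -/
def HalfLine {m : Type*} (r : m → ℝ) : Prop :=
  SignedPermLine r ∨
    ∃ j k, j ≠ k ∧ (r j = 1/2 ∨ r j = -1/2) ∧ (r k = 1/2 ∨ r k = -1/2) ∧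
      ∀ l, l ≠ j → l ≠ k → r l = 0

/-- A signed permutation matrix: exactly one nonzero entry, `±1`, in every row and column. -/
def IsSignedPermMatrix {m : Type*} (Q : Matrix m m ℝ) : Prop :=
  (∀ i, SignedPermLine (Q i)) ∧ (∀ j, SignedPermLine (fun i => Q i j))

/-- A signed half-permutation matrix. -/
def IsSignedHalfPermMatrix {m : Type*} (S : Matrix m m ℝ) : Prop :=
  (∀ i, HalfLine (S i)) ∧ (∀ j, HalfLine (fun i => S i j))

/-- `T` is an integration of the signed half-permutation matrix `S`. -/
def IsIntegration {m : Type*} (T S : Matrix m m ℝ) : Prop :=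
  IsSignedPermMatrix T ∧
    ∀ i j, ((S i j = 1 ∨ S i j = -1) → T i j = S i j) ∧
      ((S i j = 1/2 ∨ S i j = -1/2) → T i j = 2 * S i j ∨ T i j = 0) ∧
      (S i j = 0 → T i j = 0)

/-- Labeled switching equivalence: a sequence of switchings transforms `G` into `G'`. -/
def SwitchEquiv {V : Type*} (G G' : SimpleGraph V) : Prop :=
  Relation.ReflTransGen (fun H H' => ∃ v, H' = switch H v) G G'

/-- Switching equivalence allowing relabeling. -/
def SwitchEquivIso {V : Type*} (G G' : SimpleGraph V) : Prop :=
  ∃ H, SwitchEquiv G H ∧ Nonempty (H ≃g G')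

/-- The subgraph of `G` consisting of all edges whose endpoints get the same color. -/
def sameColorSubgraph {V : Type*} {n : ℕ} (G : SimpleGraph V) (c : V → Fin n) :
    G.Subgraph where
  verts := Set.univ
  Adj a b := G.Adj a b ∧ c a = c b
  adj_sub h := h.1
  edge_vert _ := Set.mem_univ _
  symm := ⟨fun a b h => ⟨h.1.symm, h.2.symm⟩⟩

/-- The `2n × 2n` block matrix `M̃ = [[M, I−M],[I−M, M]]`. -/
def tildeMat {n : ℕ} (M : Matrix (Fin n) (Fin n) ℝ) :
    Matrix (Fin n ⊕ Fin n) (Fin n ⊕ Fin n) ℝ :=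
  Matrix.fromBlocks M (1 - M) (1 - M) M

/-- Isomorphism relation on `n`-rainbow graphs on `Fin n ⊕ Fin n`. -/
def RainbowIsoRel (n : ℕ) :
    {H : SimpleGraph (Fin n ⊕ Fin n) // ∃ c : (Fin n ⊕ Fin n) → Fin n, IsRainbow H c} →
    {H : SimpleGraph (Fin n ⊕ Fin n) // ∃ c : (Fin n ⊕ Fin n) → Fin n, IsRainbow H c} → Prop :=
  fun H H' => Nonempty (H.1 ≃g H'.1)

/-!
In `double G` every vertex is adjacent to exactly one vertex of each pair `{i, i'}`. Conversely,
a graph whose vertices are paired in this way is the double of the graph it induces on one vertex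
from each pair, and choosing the other vertex of the pairs in a set `s` switches that graph at `s`.

An `n`-rainbow graph on `2n` vertices has colour classes of size two (count the edges into a
colour class), and every neighbourhood meets each class once, so it is a double: the map is onto.
Switching `G` at `v` amounts to exchanging `v` and `v'` in the double, so the map is well defined.
For injectivity, an isomorphism `double G ≃ double G'` pulls the pairing of `double G'` back to a
second pairing of `double G`. Two pairings, seen as fixed-point-free involutions, have a common
transversal; restricted to it the isomorphism relates a switching of `G` to one of `G'`.
-/

lemma existsUnique_and_iff_of_pair {α : Type*} {P Q : α → Prop} {a b : α}
    (hab : a ≠ b) (hQ : ∀ x, Q x ↔ x = a ∨ x = b) : (∃! x, P x ∧ Q x) ↔ (P b ↔ ¬ P a) := by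
  simp only [hQ]
  constructor
  · rintro ⟨x, ⟨hx, rfl | rfl⟩, huniq⟩
    · exact iff_of_false (fun hb => hab (huniq b ⟨hb, .inr rfl⟩).symm) (not_not.mpr hx)
    · exact iff_of_true hx fun ha => hab (huniq a ⟨ha, .inl rfl⟩)
  · intro h
    by_cases ha : P a
    · refine ⟨a, ⟨ha, .inl rfl⟩, ?_⟩
      rintro y ⟨hy, rfl | rfl⟩
      exacts [rfl, absurd ha (h.mp hy)]
    · refine ⟨b, ⟨h.mpr ha, .inr rfl⟩, ?_⟩
      rintro y ⟨hy, rfl | rfl⟩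
      exacts [absurd hy ha, rfl]

lemma Sum.elim_id_id_eq_iff {α : Type*} {x : α ⊕ α} {i : α} :
    Sum.elim id id x = i ↔ x = .inl i ∨ x = .inr i := by
  rcases x with j | j <;> simp


section Transversal

variable {α : Type*}

lemma Function.Involutive.exists_transversal {f : α → α} (hf : Function.Involutive f)
    (hfix : ∀ a, f a ≠ a) : ∃ T : Set α, ∀ a, f a ∈ T ↔ a ∉ T := by
  let r := WellOrderingRel (α := α)
  refine ⟨{a | r a (f a)}, fun a => ?_⟩
  simp only [Set.mem_ofPred_eq, hf a]
  rcases trichotomous_of r a (f a) with h | h | h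
  · exact iff_of_false (asymm h) (not_not.mpr h)
  · exact absurd h.symm (hfix a)
  · exact iff_of_true h (asymm h)

namespace Equiv.Perm

variable {m m' : Perm α}

lemma conj_mul_eq_inv (hm : Function.Involutive m) (hm' : Function.Involutive m') :
    m * (m * m') * m⁻¹ = (m * m')⁻¹ := by
  ext a
  simp [Perm.mul_apply, Perm.inv_def, Function.Involutive.symm_eq_self_of_involutive _ hm,
    Function.Involutive.symm_eq_self_of_involutive _ hm', hm _]

/-- In the dihedral group generated by `m` and `m'`, every reflection `m * (m * m') ^ k` is
conjugate to `m` or to `m'`, so it has no fixed point either. -/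
lemma not_sameCycle_mul_apply (hm : Function.Involutive m) (hm' : Function.Involutive m')
    (hfix : ∀ a, m a ≠ a) (hfix' : ∀ a, m' a ≠ a) (a : α) :
    ¬ (m * m').SameCycle a (m a) := by
  set σ := m * m'
  have hm_zpow : ∀ (k : ℤ) x, m ((σ ^ k) x) = (σ ^ (-k)) (m x) := by
    intro k x
    rw [zpow_neg, ← inv_zpow, ← conj_mul_eq_inv hm hm', conj_zpow]
    simp [Perm.mul_apply, σ]
  have hzpow_add : ∀ (k l : ℤ) x, (σ ^ k) ((σ ^ l) x) = (σ ^ (k + l)) x := by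
    intro k l x
    rw [zpow_add, Perm.mul_apply]
  rintro ⟨k, hk⟩
  obtain ⟨j, rfl | rfl⟩ := Int.even_or_odd' k
  · apply hfix ((σ ^ j) a)
    rw [hm_zpow, ← hk, hzpow_add]
    ring_nf
  · apply hfix' ((σ ^ j) a)
    have : m' = m * σ := by ext x; simp [σ, Perm.mul_apply, hm _]
    rw [this, Perm.mul_apply, ← Perm.mul_apply σ, ← zpow_one_add, hm_zpow, ← hk, hzpow_add]
    ring_nf

lemma exists_common_transversal (hm : Function.Involutive m) (hm' : Function.Involutive m')
    (hfix : ∀ a, m a ≠ a) (hfix' : ∀ a, m' a ≠ a) :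
    ∃ T : Set α, (∀ a, m a ∈ T ↔ a ∉ T) ∧ ∀ a, m' a ∈ T ↔ a ∉ T := by
  -- `m` conjugates `σ` to `σ⁻¹`, so it permutes the cycles of `σ`, fixing none of them; and
  -- `m' = m * σ` acts on the cycles as `m` does.
  set σ := m * m'
  have hmap : ∀ a b, σ.SameCycle a b → σ.SameCycle (m a) (m b) := by
    intro a b h
    rw [← sameCycle_inv, ← conj_mul_eq_inv hm hm', sameCycle_conj]
    simpa [Perm.inv_def, Function.Involutive.symm_eq_self_of_involutive _ hm, hm _, σ] using h
  let mQ : Quotient (SameCycle.setoid σ) → Quotient (SameCycle.setoid σ) := Quotient.map m hmap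
  have hmQ : Function.Involutive mQ := by
    rintro ⟨a⟩
    exact congrArg (Quotient.mk _) (hm a)
  obtain ⟨TQ, hTQ⟩ := hmQ.exists_transversal <| by
    rintro ⟨a⟩ h
    exact not_sameCycle_mul_apply hm hm' hfix hfix' a (Quotient.exact h).symm
  refine ⟨{a | Quotient.mk _ a ∈ TQ}, fun a => hTQ ⟦a⟧, fun a => ?_⟩
  have hσ : Quotient.mk (SameCycle.setoid σ) (σ a) = ⟦a⟧ :=
    Quotient.sound (sameCycle_apply_left.mpr (SameCycle.refl σ a))
  have : m' a = m (σ a) := by simp [σ, Perm.mul_apply, hm _]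
  change ⟦m' a⟧ ∈ TQ ↔ ⟦a⟧ ∉ TQ
  rw [this, ← hσ]
  exact hTQ ⟦σ a⟧

end Equiv.Perm

end Transversal

section Switching

variable {V W : Type*}

/-- Switching at every vertex of `s`: adjacencies across the cut `(s, sᶜ)` are reversed. -/
def switchSet (G : SimpleGraph V) (s : Set V) : SimpleGraph V where
  Adj x y := x ≠ y ∧ (G.Adj x y ↔ (x ∈ s ↔ y ∈ s))
  symm := ⟨fun x y h => ⟨h.1.symm, by rw [G.adj_comm, h.2]; exact iff_comm⟩⟩
  loopless := ⟨fun x h => h.1 rfl⟩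

@[simp]
lemma switchSet_adj {G : SimpleGraph V} {s : Set V} {x y : V} :
    (switchSet G s).Adj x y ↔ x ≠ y ∧ (G.Adj x y ↔ (x ∈ s ↔ y ∈ s)) :=
  Iff.rfl

lemma switch_eq_switchSet (G : SimpleGraph V) (v : V) : switch G v = switchSet G {v} := by
  ext x y
  simp only [switch, fromRel_adj, switchSet_adj, Set.mem_singleton_iff, G.adj_comm y x,
    or_comm (a := y = v), or_self]
  refine and_congr_right fun hxy => xor_def.trans ?_
  by_cases hx : x = v <;> by_cases hy : y = v
  · exact absurd (hx.trans hy.symm) hxy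
  all_goals simp [hx, hy]

@[simp]
lemma switchSet_empty (G : SimpleGraph V) : switchSet G ∅ = G := by
  ext x y
  simp only [switchSet_adj, Set.mem_empty_iff_false, iff_self, iff_true]
  exact ⟨fun h => h.2, fun h => ⟨h.ne, h⟩⟩

lemma switchSet_switchSet (G : SimpleGraph V) (s t : Set V) :
    switchSet (switchSet G s) t = switchSet G (symmDiff s t) := by
  ext x y
  simp only [switchSet_adj, Set.mem_symmDiff]
  tauto

lemma switchSet_switchSet_self (G : SimpleGraph V) (s : Set V) :
    switchSet (switchSet G s) s = G := by
  rw [switchSet_switchSet, symmDiff_self, Set.bot_eq_empty, switchSet_empty]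

lemma switchEquiv_switchSet [Finite V] (G : SimpleGraph V) (s : Set V) :
    SwitchEquiv G (switchSet G s) := by
  induction s, s.toFinite using Set.Finite.induction_on with
  | empty => rw [switchSet_empty]; exact .refl
  | @insert a t ha _ ih =>
    have : insert a t = symmDiff t {a} := by
      rw [(Set.disjoint_singleton_right.mpr ha).symmDiff_eq_sup]
      exact Set.union_singleton.symm
    rw [this, ← switchSet_switchSet, ← switch_eq_switchSet]
    exact ih.tail ⟨a, rfl⟩

protected def SimpleGraph.Iso.switchSet {G : SimpleGraph V} {G' : SimpleGraph W} (e : G ≃g G')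
    (t : Set W) : switchSet G (e ⁻¹' t) ≃g switchSet G' t where
  toEquiv := e.toEquiv
  map_rel_iff' := by simp [e.injective.ne_iff, e.map_adj_iff]

lemma switchEquivIso_of_iso_switchSet [Finite V] {G G' : SimpleGraph V} {s s' : Set V}
    (ψ : switchSet G s ≃g switchSet G' s') : SwitchEquivIso G G' := by
  refine ⟨_, switchEquiv_switchSet G (symmDiff s (ψ ⁻¹' s')), ⟨?_⟩⟩
  rw [← switchSet_switchSet]
  simpa only [switchSet_switchSet_self] using SimpleGraph.Iso.switchSet ψ s'

end Switching

section Double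

variable {V W : Type*} {G : SimpleGraph V}

@[simp]
lemma double_adj_inl_inl {i j : V} : (double G).Adj (.inl i) (.inl j) ↔ G.Adj i j := by
  simpa [double, G.adj_comm j i] using G.ne_of_adj

@[simp]
lemma double_adj_inr_inr {i j : V} : (double G).Adj (.inr i) (.inr j) ↔ G.Adj i j := by
  simpa [double, G.adj_comm j i] using G.ne_of_adj

@[simp]
lemma double_adj_inl_inr {i j : V} :
    (double G).Adj (.inl i) (.inr j) ↔ i = j ∨ ¬ G.Adj i j := by
  simp [double, G.adj_comm j i, eq_comm (a := j)]

@[simp]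
lemma double_adj_inr_inl {i j : V} :
    (double G).Adj (.inr i) (.inl j) ↔ i = j ∨ ¬ G.Adj i j := by
  simp [double, G.adj_comm j i, eq_comm (a := j)]

lemma double_adj_inr_iff (u : V ⊕ V) (i : V) :
    (double G).Adj u (.inr i) ↔ ¬ (double G).Adj u (.inl i) := by
  rcases u with j | j <;> by_cases h : j = i <;> simp [h]

def doubleIsoOfSplitting {H : SimpleGraph W} {K : SimpleGraph V} (e : V ⊕ V ≃ W)
    (hK : ∀ i j, K.Adj i j ↔ H.Adj (e (.inl i)) (e (.inl j)))
    (hsplit : ∀ w i, H.Adj w (e (.inr i)) ↔ ¬ H.Adj w (e (.inl i))) : double K ≃g H where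
  toEquiv := e
  map_rel_iff' := by
    rintro (i | i) (j | j)
    · simp [hK]
    · by_cases h : i = j <;> simp [hK, hsplit, h]
    · rw [(double K).adj_comm, H.adj_comm]
      by_cases h : j = i <;> simp [hK, hsplit, h]
    · simp [hK, hsplit, H.adj_comm (e (.inr i)), H.adj_comm (e (.inl j))]

protected def SimpleGraph.Iso.double {G' : SimpleGraph W} (e : G ≃g G') :
    double G ≃g double G' :=
  doubleIsoOfSplitting (Equiv.sumCongr e.toEquiv e.toEquiv)
    (fun _ _ => double_adj_inl_inl.trans e.map_adj_iff |>.symm) (fun _ _ => double_adj_inr_iff _ _)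

open Classical in
noncomputable def swapOn (s : Set V) : Equiv.Perm (V ⊕ V) :=
  Function.Involutive.toPerm (fun x => if Sum.elim id id x ∈ s then x.swap else x) <| by
    rintro (i | i) <;> by_cases h : i ∈ s <;> simp [h]

open Classical in
lemma swapOn_inl (s : Set V) (i : V) :
    swapOn s (.inl i) = if i ∈ s then .inr i else .inl i :=
  rfl

open Classical in
lemma swapOn_inr (s : Set V) (i : V) :
    swapOn s (.inr i) = if i ∈ s then .inl i else .inr i :=
  rfl

lemma double_adj_swapOn_inl (s : Set V) (i j : V) :
    (double G).Adj (swapOn s (.inl i)) (swapOn s (.inl j)) ↔ (switchSet G s).Adj i j := by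
  classical
  rw [swapOn_inl, swapOn_inl]
  by_cases hi : i ∈ s <;> by_cases hj : j ∈ s <;> by_cases h : i = j <;> simp [hi, hj, h]

noncomputable def doubleSwitchSetIso (G : SimpleGraph V) (s : Set V) :
    double (switchSet G s) ≃g double G :=
  doubleIsoOfSplitting (swapOn s) (fun i j => (double_adj_swapOn_inl s i j).symm) <| by
    classical
    intro w i
    rw [swapOn_inl, swapOn_inr]
    by_cases h : i ∈ s <;> simp [h, double_adj_inr_iff]

lemma nonempty_double_iso_of_switchEquiv {G H : SimpleGraph V} (h : SwitchEquiv G H) :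
    Nonempty (double H ≃g double G) := by
  induction h with
  | refl => exact ⟨.refl⟩
  | tail _ hstep ih =>
    obtain ⟨v, rfl⟩ := hstep
    obtain ⟨e⟩ := ih
    exact ⟨(switch_eq_switchSet _ v ▸ doubleSwitchSetIso _ {v}).trans e⟩

end Double

section Rainbow

variable {V : Type*} {n : ℕ} {H : SimpleGraph V} {c : V → Fin n}

lemma isRainbow_double (G : SimpleGraph (Fin n)) : IsRainbow (double G) (Sum.elim id id) :=
  fun v i => (existsUnique_and_iff_of_pair Sum.inl_ne_inr
    fun _ => Sum.elim_id_id_eq_iff).mpr (double_adj_inr_iff v i)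

lemma IsRainbow.card_neighborSet (hc : IsRainbow H c) (v : V) [Fintype (H.neighborSet v)] :
    Fintype.card (H.neighborSet v) = n := by
  rw [← Fintype.card_fin n]
  refine Fintype.card_of_bijective (f := fun w => c w) ⟨fun w w' h => ?_, fun i => ?_⟩
  · exact Subtype.ext <| (hc v (c w')).unique ⟨w.2, h⟩ ⟨w'.2, rfl⟩
  · obtain ⟨w, ⟨hw, rfl⟩, -⟩ := hc v i
    exact ⟨⟨w, hw⟩, rfl⟩

open Finset in
lemma IsRainbow.card_eq_mul_card_fiber [Fintype V] (hc : IsRainbow H c) (i : Fin n) :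
    Fintype.card V = #{v | c v = i} * n := by
  classical
  choose f hf huniq using fun v => hc v i
  have hfiber : ∀ w, c w = i → #{v | f v = w} = n := by
    intro w hw
    rw [← hc.card_neighborSet w, ← Set.toFinset_card]
    congr 1
    ext v
    simp only [mem_filter, mem_univ, true_and, Set.mem_toFinset, mem_neighborSet]
    exact ⟨fun h => h ▸ (hf v).1.symm, fun h => (huniq v w ⟨h.symm, hw⟩).symm⟩
  rw [← card_univ, card_eq_sum_card_fiberwise (f := f) (t := {w | c w = i})
    (fun v _ => mem_filter.mpr ⟨mem_univ _, (hf v).2⟩), sum_const_nat]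
  simpa using hfiber

lemma IsRainbow.card_fiber [Fintype V] (hc : IsRainbow H c) (hV : Fintype.card V = 2 * n)
    (i : Fin n) :
    Fintype.card {v // c v = i} = 2 := by
  rw [Fintype.card_subtype]
  have := hc.card_eq_mul_card_fiber i
  exact Nat.eq_of_mul_eq_mul_right i.pos (by lia)

lemma IsRainbow.exists_double_iso [Fintype V] (hc : IsRainbow H c)
    (hV : Fintype.card V = 2 * n) : ∃ K : SimpleGraph (Fin n), Nonempty (double K ≃g H) := by
  classical
  let e : Fin n ⊕ Fin n ≃ V := Equiv.ofFiberEquiv (f := Sum.elim id id) fun i =>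
    Fintype.equivOfCardEq <| by
      rw [hc.card_fiber hV, (isRainbow_double ⊥).card_fiber (by simp [two_mul])]
  have hce : ∀ x, c (e x) = Sum.elim id id x := Equiv.ofFiberEquiv_map _
  have he : ∀ v i, c v = i ↔ v = e (.inl i) ∨ v = e (.inr i) := by
    intro v i
    obtain ⟨x, rfl⟩ := e.surjective v
    simp only [hce, Sum.elim_id_id_eq_iff, e.apply_eq_iff_eq]
  refine ⟨H.comap (e ∘ .inl), ⟨doubleIsoOfSplitting e (fun _ _ => Iff.rfl) fun w i => ?_⟩⟩
  exact (existsUnique_and_iff_of_pair (e.injective.ne Sum.inl_ne_inr)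
    (he · i)).mp (hc w i)

end Rainbow

section Injectivity

variable {V : Type*}

lemma range_swapOn_comp_inl {T : Set (V ⊕ V)} (hT : ∀ x, x.swap ∈ T ↔ x ∉ T) :
    Set.range (swapOn {i | .inr i ∈ T} ∘ .inl) = T := by
  classical
  refine Set.ext fun x => ⟨?_, fun hx => ⟨Sum.elim id id x, ?_⟩⟩
  · rintro ⟨i, rfl⟩
    by_cases h : .inr i ∈ T
    · simp [swapOn_inl, h]
    · simpa [swapOn_inl, h] using not_not.mp ((hT (.inl i)).not.mp h)
  · rcases x with i | i
    · have : Sum.inr i ∉ T := fun h => (hT (.inl i)).mp h hx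
      simp [swapOn_inl, this]
    · simp [swapOn_inl, hx]

noncomputable def switchSetIsoInduce (G : SimpleGraph V) {T : Set (V ⊕ V)}
    (hT : ∀ x, x.swap ∈ T ↔ x ∉ T) : switchSet G {i | .inr i ∈ T} ≃g (double G).induce T :=
  let f : switchSet G {i | .inr i ∈ T} ↪g double G :=
    ⟨⟨swapOn _ ∘ .inl, (swapOn _).injective.comp Sum.inl_injective⟩,
      double_adj_swapOn_inl _ _ _⟩
  f.isoInduceRange.trans <| Iso.refl.induce <| by
    change Set.BijOn id (Set.range (swapOn _ ∘ .inl)) T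
    rw [range_swapOn_comp_inl hT]
    exact Set.bijOn_id T

lemma switchEquivIso_of_double_iso [Finite V] {G G' : SimpleGraph V}
    (φ : double G ≃g double G') : SwitchEquivIso G G' := by
  let τ := Equiv.sumComm V V
  have hτ : Function.Involutive τ := Sum.swap_swap
  have hτfix : ∀ x, τ x ≠ x := by rintro (i | i) <;> simp [τ]
  let τ' : Equiv.Perm (V ⊕ V) := (φ.toEquiv.trans τ).trans φ.symm.toEquiv
  obtain ⟨T, hT, hT'⟩ := Equiv.Perm.exists_common_transversal (m := τ) (m' := τ') hτ
    (fun x => by simp [τ', hτ _]) hτfix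
    (fun x h => hτfix (φ x) (by simpa [τ'] using congrArg φ h))
  have hφT : ∀ w, w.swap ∈ φ.symm ⁻¹' T ↔ w ∉ φ.symm ⁻¹' T := fun w => by
    simpa [τ', τ] using hT' (φ.symm w)
  exact switchEquivIso_of_iso_switchSet <| (switchSetIsoInduce G hT).trans <|
    (φ.induce (φ.toEquiv.bijOn fun v => by simp)).trans (switchSetIsoInduce G' hφT).symm

end Injectivity

lemma rainbowIsoRel_equivalence (n : ℕ) : Equivalence (RainbowIsoRel n) :=
  ⟨fun _ => ⟨.refl⟩, fun ⟨e⟩ => ⟨e.symm⟩, fun ⟨e⟩ ⟨e'⟩ => ⟨e.trans e'⟩⟩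

/-- sending the switching class of `G` to the isomorphism class of its
double is a bijection between switching classes of graphs on `n` vertices and
isomorphism classes of `n`-rainbow graphs on `2n` vertices. -/
theorem switching_classes_equiv_rainbow (n : ℕ) :
    ∃ f : Quot (SwitchEquivIso (V := Fin n)) → Quot (RainbowIsoRel n),
      Function.Bijective f ∧
        ∀ (G : SimpleGraph (Fin n)) (hG : ∃ c : (Fin n ⊕ Fin n) → Fin n, IsRainbow (double G) c),
          f (Quot.mk (SwitchEquivIso (V := Fin n)) G)
            = Quot.mk (RainbowIsoRel n) ⟨double G, hG⟩ := by
  let doubleClass (G : SimpleGraph (Fin n)) : Quot (RainbowIsoRel n) :=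
    Quot.mk _ ⟨double G, Sum.elim id id, isRainbow_double G⟩
  have hsound : ∀ G G', SwitchEquivIso G G' → doubleClass G = doubleClass G' := by
    rintro G G' ⟨H, hGH, ⟨e⟩⟩
    obtain ⟨e'⟩ := nonempty_double_iso_of_switchEquiv hGH
    exact Quot.sound ⟨e'.symm.trans e.double⟩
  refine ⟨Quot.lift doubleClass hsound, ⟨?_, ?_⟩, fun _ _ => rfl⟩
  · rintro ⟨G⟩ ⟨G'⟩ h
    obtain ⟨φ⟩ := (rainbowIsoRel_equivalence n).eqvGen_iff.mp (Quot.eqvGen_exact h)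
    exact Quot.sound (switchEquivIso_of_double_iso φ)
  · rintro ⟨⟨H, c, hc⟩⟩
    obtain ⟨K, ⟨e⟩⟩ := hc.exists_double_iso (by simp [two_mul])
    exact ⟨Quot.mk _ K, Quot.sound ⟨e⟩⟩
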